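/- For any multi-permutation ρ ∈ S(M), each of the two sets C^e = {γ ∈ S(M) : d_K(ρ, γ) ≡ 0 (mod 2)} and C^o = {γ ∈ S(M) : d_K(ρ, γ) ≡ 1 (mod 2)} has minimum Kendall τ-distance at least 2; that is, any two distinct multi-permutations that lie at distances from ρ of the same parity are at Kendall τ-distance at least 2 from each other. -/

import Mathlib

/-- `AdjTrans σ π` : the sequence `π` is obtained from the sequence `σ` by exchanging
two distinct adjacent elements (an adjacent transposition). -/
def AdjTrans (σ π : List ℤ) : Prop :=
  ∃ (l₁ l₂ : List ℤ) (a b : ℤ), a ≠ b ∧ σ = l₁ ++ a :: b :: l₂ ∧ π = l₁ ++ b :: a :: l₂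

/-- `StepsTo n σ π` : `π` can be obtained from `σ` by a sequence of `n` adjacent
transpositions. -/
def StepsTo : ℕ → List ℤ → List ℤ → Prop
  | 0 => fun σ π => σ = π
  | n + 1 => fun σ π => ∃ τ, AdjTrans σ τ ∧ StepsTo n τ π

/-- The Kendall τ-distance between two sequences: the minimum number of adjacent
transpositions needed to transform one into the other. -/
noncomputable def dK (σ π : List ℤ) : ℕ := sInf {n | StepsTo n σ π}

/-- The list `[a, a+1, ..., a+len-1]` of integers. -/
def rangeList (a len : ℕ) : List ℤ := (List.range' a len).map (fun x => (x : ℤ))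

/-- The substitution map `T_θ`: the `r`-th occurrence (from the left, `0`-indexed) of a
rank `a` in `σ` is replaced by the `r`-th entry of the list `θ a`. -/
def Tmap (θ : ℤ → List ℤ) (σ : List ℤ) : List ℤ :=
  (List.range σ.length).map (fun j =>
    (θ (σ.getD j 0)).getD ((σ.take j).count (σ.getD j 0)) 0)

/-- `psiEntry σ a s` : the number of positions in `σ` strictly to the right of the `s`-th
occurrence (`0`-indexed) of `a` in `σ` that hold an element smaller than `a`. -/
def psiEntry (σ : List ℤ) (a : ℤ) (s : ℕ) : ℕ :=
  (σ.drop (((σ.indexesOf a).getD s σ.length) + 1)).countP (fun x => decide (x < a))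

/-- The Manhattan distance between two vectors of naturals (presented as lists). -/
def manhattanL (x y : List ℕ) : ℕ :=
  ∑ i ∈ Finset.range (max x.length y.length), ((x.getD i 0 : ℤ) - (y.getD i 0 : ℤ)).natAbs

/-- The Lee distance over `Z_q` between two vectors with entries in `{0, …, q-1}`
(presented as lists). -/
def leeDistL (q : ℕ) (x y : List ℕ) : ℕ :=
  ∑ i ∈ Finset.range (max x.length y.length),
    min (((x.getD i 0 : ℤ) - (y.getD i 0 : ℤ)).natAbs)
      (q - ((x.getD i 0 : ℤ) - (y.getD i 0 : ℤ)).natAbs)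

/-- The Lee distance between two vectors over `ZMod q`. -/
def zmodLee {q N : ℕ} (x y : Fin N → ZMod q) : ℕ :=
  ∑ i, min (x i - y i).val (y i - x i).val

/-- `permList k σ` : `σ` is (an ordering representing) a permutation of `{1, …, k}`. -/
def permList (k : ℕ) (σ : List ℤ) : Prop :=
  (↑σ : Multiset ℤ) = (↑(rangeList 1 k) : Multiset ℤ)

/-- The multiset `M_{k,r} = {0^k, k+1, …, k+r}`. -/
def Mkr (k r : ℕ) : Multiset ℤ :=
  Multiset.replicate k (0 : ℤ) + (↑(rangeList (k + 1) r) : Multiset ℤ)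

/-- `α_{↓k}` : delete from `α` all elements larger than `k`. -/
def restrictTo (k : ℕ) (α : List ℤ) : List ℤ :=
  α.filter (fun x => decide (x ≤ (k : ℤ)))

/-- `α_{k↦0}` : replace in `α` every element of `{1, …, k}` by `0`. -/
def mapToZero (k : ℕ) (α : List ℤ) : List ℤ :=
  α.map (fun x => if 1 ≤ x ∧ x ≤ (k : ℤ) then 0 else x)

/-- `star σ ρ = σ ∗ ρ` : replace the zeros of `ρ`, from left to right, by the elements
of `σ` in order. -/
def starP : List ℤ → List ℤ → List ℤ
  | _, [] => []
  | σ, x :: ρ' => if x = 0 then σ.headD 0 :: starP σ.tail ρ' else x :: starP σ ρ'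

/-!
An adjacent transposition of two distinct entries changes the number of inversions by exactly
one, so `d_K(σ, π) ≡ inv σ + inv π (mod 2)` whenever `π` is a rearrangement of `σ`. Hence two
multi-permutations at distances of equal parity from `ρ` are at even distance from each other,
and that distance is nonzero when they differ.
-/

section Inversions

variable {α : Type*} [LinearOrder α]

def invCount : List α → ℕ
  | [] => 0
  | a :: l => l.countP (· < a) + invCount l

theorem invCount_append (l₁ l₂ : List α) :
    invCount (l₁ ++ l₂) =
      invCount l₁ + (l₁.map fun a => l₂.countP (· < a)).sum + invCount l₂ := by
  induction l₁ with
  | nil => simp [invCount]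
  | cons a t ih => simp [invCount, ih, List.countP_append]; ring

theorem invCount_swap_add_invCount_odd (l₁ l₂ : List α) {a b : α} (hab : a ≠ b) :
    (invCount (l₁ ++ a :: b :: l₂) + invCount (l₁ ++ b :: a :: l₂)) % 2 = 1 := by
  have hcross : (l₁.map fun c => (a :: b :: l₂).countP (· < c)) =
      l₁.map fun c => (b :: a :: l₂).countP (· < c) :=
    List.map_congr_left fun c _ => by simp only [List.countP_cons]; omega
  rw [invCount_append, invCount_append, hcross]
  simp only [invCount, List.countP_cons]
  rcases hab.lt_or_gt with h | h <;> simp [h, not_lt.2 h.le] <;> omega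

end Inversions

namespace StepsTo

theorem of_adjTrans {σ π : List ℤ} (h : AdjTrans σ π) : StepsTo 1 σ π := ⟨π, h, rfl⟩

theorem trans {m n : ℕ} {σ τ π : List ℤ} (h₁ : StepsTo m σ τ) (h₂ : StepsTo n τ π) :
    StepsTo (m + n) σ π := by
  induction m generalizing σ with
  | zero => cases h₁; simpa using h₂
  | succ m ih =>
    obtain ⟨τ', hστ', hτ'τ⟩ := h₁
    rw [Nat.succ_add]
    exact ⟨τ', hστ', ih hτ'τ⟩

theorem cons {n : ℕ} (c : ℤ) {σ π : List ℤ} (h : StepsTo n σ π) :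
    StepsTo n (c :: σ) (c :: π) := by
  induction n generalizing σ with
  | zero => cases h; rfl
  | succ n ih =>
    obtain ⟨τ, ⟨l₁, l₂, a, b, hab, rfl, rfl⟩, hτπ⟩ := h
    exact ⟨_, ⟨c :: l₁, l₂, a, b, hab, rfl, rfl⟩, ih hτπ⟩

theorem mod_two {n : ℕ} {σ π : List ℤ} (h : StepsTo n σ π) :
    n % 2 = (invCount σ + invCount π) % 2 := by
  induction n generalizing σ with
  | zero => cases h; omega
  | succ n ih =>
    obtain ⟨τ, ⟨l₁, l₂, a, b, hab, rfl, rfl⟩, hτπ⟩ := h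
    have := ih hτπ
    have := invCount_swap_add_invCount_odd l₁ l₂ hab
    omega

end StepsTo

theorem exists_stepsTo_cons_append_eq_append_cons (a : ℤ) (u v : List ℤ) :
    ∃ n, StepsTo n (a :: (u ++ v)) (u ++ a :: v) := by
  induction u with
  | nil => exact ⟨0, rfl⟩
  | cons b u ih =>
    obtain ⟨n, hn⟩ := ih
    -- moving `a` past an equal entry costs no transposition
    by_cases hab : a = b
    · subst hab
      exact ⟨n, hn.cons a⟩
    · exact ⟨1 + n, (StepsTo.of_adjTrans ⟨[], u ++ v, a, b, hab, rfl, rfl⟩).trans (hn.cons b)⟩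

theorem List.Perm.exists_stepsTo {l₁ l₂ : List ℤ} (h : l₁.Perm l₂) : ∃ n, StepsTo n l₁ l₂ := by
  induction l₁ generalizing l₂ with
  | nil => exact ⟨0, h.nil_eq⟩
  | cons a t ih =>
    obtain ⟨u, v, rfl⟩ := List.append_of_mem (h.mem_iff.1 List.mem_cons_self)
    obtain ⟨m, hm⟩ := ih (h.trans List.perm_middle).cons_inv
    obtain ⟨n, hn⟩ := exists_stepsTo_cons_append_eq_append_cons a u v
    exact ⟨m + n, (hm.cons a).trans hn⟩

theorem List.Perm.stepsTo_dK {l₁ l₂ : List ℤ} (h : l₁.Perm l₂) : StepsTo (dK l₁ l₂) l₁ l₂ :=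
  Nat.sInf_mem h.exists_stepsTo

theorem List.Perm.dK_mod_two {l₁ l₂ : List ℤ} (h : l₁.Perm l₂) :
    dK l₁ l₂ % 2 = (invCount l₁ + invCount l₂) % 2 :=
  h.stepsTo_dK.mod_two

/-- For any `ρ ∈ S(M)`, each of the parity classes
`C^e = {γ ∈ S(M) : d_K(ρ, γ) even}` and `C^o = {γ ∈ S(M) : d_K(ρ, γ) odd}` has minimum
Kendall τ-distance at least 2: any two distinct multi-permutations of `S(M)` lying at
distances of the same parity from `ρ` are at Kendall τ-distance at least `2` from
each other. -/
theorem stmt3 (M : Multiset ℤ) (ρ γ₁ γ₂ : List ℤ)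
    (hρ : (↑ρ : Multiset ℤ) = M) (hγ₁ : (↑γ₁ : Multiset ℤ) = M) (hγ₂ : (↑γ₂ : Multiset ℤ) = M)
    (hne : γ₁ ≠ γ₂) (hpar : dK ρ γ₁ % 2 = dK ρ γ₂ % 2) :
    2 ≤ dK γ₁ γ₂ := by
  have h₁ : ρ.Perm γ₁ := Multiset.coe_eq_coe.1 (hρ.trans hγ₁.symm)
  have h₂ : ρ.Perm γ₂ := Multiset.coe_eq_coe.1 (hρ.trans hγ₂.symm)
  have h₁₂ : γ₁.Perm γ₂ := Multiset.coe_eq_coe.1 (hγ₁.trans hγ₂.symm)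
  have hpos : dK γ₁ γ₂ ≠ 0 := fun h => hne (by simpa [h, StepsTo] using h₁₂.stepsTo_dK)
  have := h₁.dK_mod_two
  have := h₂.dK_mod_two
  have := h₁₂.dK_mod_two
  omega
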